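/- arXiv:1105.4105 — 2 statements merged into one kernel-verified Lean document; each statement's English description precedes it below -/
import Mathlib

section
/- Let (a_k)_{k∈ℕ} be a sequence of nonnegative real numbers, let ε ≥ 0, C ≥ 0, p ≥ 0 and t > 0 satisfy ε · 8⁸ · t⁸ ≤ 1/2, and suppose that a_k ≤ ε k⁸ a_{k−8} + C p^k for every integer k ≥ 8. Then the series Σ_{k=0}^∞ (t^k / k!) a_k converges (i.e. Σ_{k=0}^∞ t^k a_k / k! < ∞). -/
open Finset

private lemma nat_pow_le_descFactorial {k : ℕ} (hk : 8 ≤ k) :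
    k ^ 8 * (k - 8).factorial ≤ 8 ^ 8 * k.factorial := by
  have hfac : (k - 8).factorial * k.descFactorial 8 = k.factorial :=
    Nat.factorial_mul_descFactorial hk
  have hdesc : k ^ 8 ≤ 8 ^ 8 * k.descFactorial 8 := by
    rw [Nat.descFactorial_eq_prod_range]
    calc k ^ 8 = ∏ _i ∈ range 8, k := by rw [Finset.prod_const, card_range]
    _ ≤ ∏ i ∈ range 8, 8 * (k - i) := by
        apply Finset.prod_le_prod
        · intro i _; exact Nat.zero_le _
        · intro i hi
          simp only [mem_range] at hi
          omega
    _ = 8 ^ 8 * ∏ i ∈ range 8, (k - i) := by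
        rw [Finset.prod_mul_distrib, Finset.prod_const, card_range]
  calc k ^ 8 * (k - 8).factorial ≤ 8 ^ 8 * k.descFactorial 8 * (k - 8).factorial :=
        Nat.mul_le_mul_right _ hdesc
    _ = 8 ^ 8 * k.factorial := by rw [mul_assoc, mul_comm (k.descFactorial 8), hfac]

/-- The abstract summation argument of Theorem 5.1: a nonnegative sequence satisfying the
recursive bound `a_k ≤ ε k⁸ a_{k-8} + C p^k` with `ε 8⁸ t⁸ ≤ 1/2` has
`Σ_k t^k a_k / k! < ∞`. -/
theorem summable_of_recursive_bound
    (a : ℕ → ℝ) (ha : ∀ k, 0 ≤ a k) (ε C p t : ℝ)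
    (hε : 0 ≤ ε) (hC : 0 ≤ C) (hp : 0 ≤ p) (ht : 0 < t)
    (hsmall : ε * 8 ^ 8 * t ^ 8 ≤ 1 / 2)
    (hrec : ∀ k : ℕ, 8 ≤ k → a k ≤ ε * (k : ℝ) ^ 8 * a (k - 8) + C * p ^ k) :
    Summable (fun k : ℕ => t ^ k / (k.factorial : ℝ) * a k) := by
  set f : ℕ → ℝ := fun k => t ^ k / (k.factorial : ℝ) * a k with hf
  have hfpos : ∀ k, 0 ≤ f k := fun k =>
    mul_nonneg (div_nonneg (pow_nonneg ht.le _) (Nat.cast_nonneg _)) (ha k)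
  have key : ∀ k : ℕ, 8 ≤ k → f k ≤ (1/2) * f (k - 8) + C * (t * p) ^ k / k.factorial := by
    intro k hk
    have hF1 : (0:ℝ) < (k.factorial : ℝ) := by exact_mod_cast k.factorial_pos
    have hF2 : (0:ℝ) < ((k - 8).factorial : ℝ) := by exact_mod_cast (k - 8).factorial_pos
    have hA : (0:ℝ) ≤ t ^ (k - 8) := pow_nonneg ht.le _
    have htk : t ^ k = t ^ 8 * t ^ (k - 8) := by
      rw [← pow_add]; congr 1; omega
    have hnatR : (k:ℝ) ^ 8 * ((k - 8).factorial : ℝ) ≤ 8 ^ 8 * (k.factorial : ℝ) := by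
      exact_mod_cast nat_pow_le_descFactorial hk
    have step1 : f k ≤ t ^ k / k.factorial * (ε * (k : ℝ) ^ 8 * a (k - 8) + C * p ^ k) :=
      mul_le_mul_of_nonneg_left (hrec k hk)
        (div_nonneg (pow_nonneg ht.le _) (Nat.cast_nonneg _))
    have step2 : ε * (k:ℝ) ^ 8 * t ^ k / k.factorial ≤ (1/2) * (t ^ (k - 8) / (k - 8).factorial) := by
      rw [← mul_div_assoc, div_le_div_iff₀ hF1 hF2]
      have h1 : ε * t ^ 8 * ((k:ℝ) ^ 8 * ((k - 8).factorial : ℝ)) ≤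
          ε * t ^ 8 * (8 ^ 8 * (k.factorial : ℝ)) :=
        mul_le_mul_of_nonneg_left hnatR (by positivity)
      have h2 : ε * 8 ^ 8 * t ^ 8 * (k.factorial : ℝ) ≤ (1/2) * (k.factorial : ℝ) :=
        mul_le_mul_of_nonneg_right hsmall hF1.le
      rw [htk]
      nlinarith [mul_le_mul_of_nonneg_right h1 hA, mul_le_mul_of_nonneg_right h2 hA]
    calc f k ≤ t ^ k / k.factorial * (ε * (k : ℝ) ^ 8 * a (k - 8) + C * p ^ k) := step1
      _ = (ε * (k:ℝ) ^ 8 * t ^ k / k.factorial) * a (k - 8) + C * (t * p) ^ k / k.factorial := by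
          rw [mul_pow]; ring
      _ ≤ (1/2) * (t ^ (k - 8) / (k - 8).factorial) * a (k - 8) + C * (t * p) ^ k / k.factorial :=
          add_le_add (mul_le_mul_of_nonneg_right step2 (ha _)) le_rfl
      _ = (1/2) * f (k - 8) + C * (t * p) ^ k / k.factorial := by rw [hf]; ring
  set M : ℝ := 2 * ((∑ k ∈ range 8, f k) + C * Real.exp (t * p)) with hM
  apply summable_of_sum_range_le hfpos (c := M)
  intro n
  set m := max n 8 with hm
  have hnm : ∑ k ∈ range n, f k ≤ ∑ k ∈ range m, f k :=
    Finset.sum_le_sum_of_subset_of_nonneg (Finset.range_subset_range.2 (le_max_left _ _))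
      (fun k _ _ => hfpos k)
  have h8m : 8 ≤ m := le_max_right _ _
  have hsplit : ∑ k ∈ range m, f k = (∑ k ∈ range 8, f k) + ∑ k ∈ Ico 8 m, f k := by
    rw [range_eq_Ico]
    exact (Finset.sum_Ico_consecutive _ (Nat.zero_le 8) h8m).symm
  have hshift : ∑ k ∈ Ico 8 m, f (k - 8) ≤ ∑ k ∈ range m, f k := by
    rw [Finset.sum_Ico_eq_sum_range]
    simp only [Nat.add_sub_cancel_left]
    exact Finset.sum_le_sum_of_subset_of_nonneg (Finset.range_subset_range.2 (by omega))
      (fun k _ _ => hfpos k)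
  have hexp : ∑ k ∈ Ico 8 m, C * (t * p) ^ k / k.factorial ≤ C * Real.exp (t * p) := by
    have htp : 0 ≤ t * p := mul_nonneg ht.le hp
    calc ∑ k ∈ Ico 8 m, C * (t * p) ^ k / k.factorial
        = C * ∑ k ∈ Ico 8 m, (t * p) ^ k / k.factorial := by
          rw [Finset.mul_sum]; congr 1; ext k; ring
      _ ≤ C * ∑ k ∈ range m, (t * p) ^ k / k.factorial := by
          apply mul_le_mul_of_nonneg_left _ hC
          apply Finset.sum_le_sum_of_subset_of_nonneg
          · rw [range_eq_Ico]; exact Finset.Ico_subset_Ico (Nat.zero_le _) le_rfl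
          · intro k _ _; positivity
      _ ≤ C * Real.exp (t * p) :=
          mul_le_mul_of_nonneg_left (Real.sum_le_exp_of_nonneg htp m) hC
  have hmid : ∑ k ∈ Ico 8 m, f k ≤
      (1/2) * ∑ k ∈ range m, f k + C * Real.exp (t * p) := by
    calc ∑ k ∈ Ico 8 m, f k
        ≤ ∑ k ∈ Ico 8 m, ((1/2) * f (k - 8) + C * (t * p) ^ k / k.factorial) := by
          apply Finset.sum_le_sum
          intro k hk
          exact key k (Finset.mem_Ico.1 hk).1
      _ = (1/2) * (∑ k ∈ Ico 8 m, f (k - 8)) + ∑ k ∈ Ico 8 m, C * (t * p) ^ k / k.factorial := by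
          rw [Finset.sum_add_distrib, Finset.mul_sum]
      _ ≤ (1/2) * ∑ k ∈ range m, f k + C * Real.exp (t * p) :=
          add_le_add (mul_le_mul_of_nonneg_left hshift (by norm_num)) hexp
  have : ∑ k ∈ range m, f k ≤ M := by
    rw [hM]
    have := hsplit
    linarith
  linarith
end

section
/- Let N ≥ 1, let 0 ≤ α < β be real numbers, let φ : [α, β] → ℝ be continuous, let E : ℝ^N → ℝ be smooth and let H : ℝ^N → ℝ^N be a smooth vector field. Define ψ : [0, β] → ℝ by ψ(σ) = ∫_{max{α,σ}}^{β} φ(s) ds. Then ∫_{{α<|x|<β}} φ(|x|) E(x) ⟨x/|x|, H(x)⟩ dx = ∫_{{|x|<β}} ψ(|x|) ( ⟨∇E(x), H(x)⟩ + E(x) div H(x) ) dx, where div H = Σ_{n=1}^N ∂_n H_n. -/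
open MeasureTheory

/-- The divergence `div H = Σᵢ ∂ᵢ Hᵢ` of a vector field. -/
noncomputable def diver {N : ℕ}
    (H : EuclideanSpace ℝ (Fin N) → EuclideanSpace ℝ (Fin N)) :
    EuclideanSpace ℝ (Fin N) → ℝ :=
  fun x => ∑ i, fderiv ℝ H x (EuclideanSpace.single i 1) i

open Set Filter Topology

section Aux


-- cutoff function facts
noncomputable def cutoff (α β : ℝ) (k : ℕ) (t : ℝ) : ℝ :=
  max 0 (min 1 ((k+1 : ℝ) * min (t - α) (β - t)))

lemma cutoff_continuous (α β : ℝ) (k : ℕ) : Continuous (cutoff α β k) := by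
  unfold cutoff
  fun_prop

lemma cutoff_nonneg (α β : ℝ) (k : ℕ) (t : ℝ) : 0 ≤ cutoff α β k t := le_max_left _ _

lemma cutoff_le_one (α β : ℝ) (k : ℕ) (t : ℝ) : cutoff α β k t ≤ 1 :=
  max_le zero_le_one (min_le_left _ _)

lemma cutoff_eq_zero (α β : ℝ) (k : ℕ) (t : ℝ) (ht : t ∉ Set.Ioo α β) :
    cutoff α β k t = 0 := by
  unfold cutoff
  rw [Set.mem_Ioo, not_and_or] at ht
  have hm : min (t - α) (β - t) ≤ 0 := by
    rcases ht with h | h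
    · push_neg at h; exact le_trans (min_le_left _ _) (by linarith)
    · push_neg at h; exact le_trans (min_le_right _ _) (by linarith)
  have : (k+1 : ℝ) * min (t - α) (β - t) ≤ 0 := mul_nonpos_of_nonneg_of_nonpos (by positivity) hm
  rw [max_eq_left (le_trans (min_le_right _ _) this)]

lemma cutoff_tendsto (α β : ℝ) (t : ℝ) (ht : t ∈ Set.Ioo α β) :
    Tendsto (fun k : ℕ => cutoff α β k t) atTop (𝓝 1) := by
  have hm : 0 < min (t - α) (β - t) := lt_min (by linarith [ht.1]) (by linarith [ht.2])
  obtain ⟨K, hK⟩ := exists_nat_ge (1 / min (t - α) (β - t))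
  apply tendsto_atTop_of_eventually_const (i₀ := K)
  intro k hk
  unfold cutoff
  have h1 : (1:ℝ) ≤ (k+1 : ℝ) * min (t - α) (β - t) := by
    rw [div_le_iff₀ hm] at hK
    calc (1:ℝ) ≤ K * min (t - α) (β - t) := hK
      _ ≤ (k+1 : ℝ) * min (t - α) (β - t) := by
          apply mul_le_mul_of_nonneg_right _ hm.le
          have : (K:ℝ) ≤ k := Nat.cast_le.mpr hk
          linarith
  rw [min_eq_left h1, max_eq_right zero_le_one]


lemma interval_zero {b : ℝ} {g : ℝ → ℝ} (h : ∀ t, b ≤ t → g t = 0) (σ : ℝ) (hσ : b ≤ σ) :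
    ∫ t in σ..b, g t = 0 := by
  have hz : ∀ t ∈ Set.uIcc σ b, g t = 0 := by
    intro t ht
    rw [Set.uIcc_of_ge hσ] at ht
    exact h t ht.1
  rw [intervalIntegral.integral_congr hz, intervalIntegral.integral_zero]

section GenN
variable {N : ℕ}
local notation "ES" => EuclideanSpace ℝ (Fin N)


lemma normFDeriv (x : ES) (hx : x ≠ 0) :
    HasFDerivAt (fun y : ES => ‖y‖) (innerSL ℝ ((‖x‖)⁻¹ • x)) x := by
  have hxn : ‖x‖ ≠ 0 := norm_ne_zero_iff.mpr hx
  have h1 : HasFDerivAt (fun y : ES => ‖y‖ ^ 2) (2 • (innerSL ℝ x)) x :=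
    (hasStrictFDerivAt_norm_sq x).hasFDerivAt
  have h2 : HasDerivAt Real.sqrt (1 / (2 * Real.sqrt (‖x‖^2))) (‖x‖^2) := by
    apply Real.hasDerivAt_sqrt
    positivity
  have h3 := (h2.comp_hasFDerivAt x h1)
  have heq : (Real.sqrt ∘ fun y : ES => ‖y‖^2) = fun y : ES => ‖y‖ := by
    funext y; simp [Function.comp, Real.sqrt_sq (norm_nonneg y)]
  rw [heq] at h3
  refine HasFDerivAt.congr_fderiv h3 ?_
  rw [Real.sqrt_sq (norm_nonneg x)]
  ext v
  simp only [innerSL_apply_apply, ContinuousLinearMap.smul_apply, ContinuousLinearMap.smul_apply,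
    real_inner_smul_left, smul_eq_mul]
  field_simp
  ring


lemma sum_single (L : ES →L[ℝ] ℝ) (y : ES) :
    ∑ i, L (EuclideanSpace.single i 1) * y i = L y := by
  have hy : y = ∑ i, y i • EuclideanSpace.single i (1:ℝ) := by
    ext j
    rw [WithLp.ofLp_sum, Finset.sum_apply]
    rw [Finset.sum_eq_single j]
    · simp [EuclideanSpace.single_apply]
    · intro b _ hb
      simp only [PiLp.smul_apply, EuclideanSpace.single_apply, smul_eq_mul]
      rw [if_neg (fun h => hb h.symm), mul_zero]
    · simp
  conv_rhs => rw [hy]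
  rw [map_sum]
  congr 1; funext i
  rw [L.map_smul]
  simp [mul_comm]


end GenN

section DivThm
variable {n : ℕ}
local notation "ES" => EuclideanSpace ℝ (Fin (n+1))


noncomputable local instance : PartialOrder (EuclideanSpace ℝ (Fin (n+1))) :=
  PartialOrder.lift (fun x : EuclideanSpace ℝ (Fin (n+1)) => (WithLp.ofLp x : Fin (n+1) → ℝ))
    (WithLp.ofLp_injective 2)

lemma coordinate_abs_le_norm (y : ES) (i : Fin (n+1)) : |y i| ≤ ‖y‖ := by
  have := abs_real_inner_le_norm (EuclideanSpace.single i (1:ℝ)) y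
  simpa [EuclideanSpace.inner_single_left, EuclideanSpace.norm_single] using this

lemma divergence_integral_zero {β : ℝ} (hβ : 0 < β)
    (f : ES → ES) (f' : ES → (EuclideanSpace ℝ (Fin (n+1)) →L[ℝ] EuclideanSpace ℝ (Fin (n+1))))
    (hc : Continuous f)
    (hd : ∀ x : ES, x ≠ 0 → HasFDerivAt f (f' x) x)
    (hsupp : ∀ x : ES, β ≤ ‖x‖ → f x = 0)
    (hdiv0 : ∀ x : ES, β ≤ ‖x‖ → ∑ i, f' x (EuclideanSpace.single i 1) i = 0)
    (hint : Integrable (fun x : ES => ∑ i, f' x (EuclideanSpace.single i 1) i)) :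
    ∫ x : ES, ∑ i, f' x (EuclideanSpace.single i 1) i = 0 := by
  have main : ∀ (aa bb : ES), aa ≤ bb → True := fun _ _ _ => trivial
  set eL : EuclideanSpace ℝ (Fin (n+1)) ≃L[ℝ] (Fin (n+1) → ℝ) :=
    PiLp.continuousLinearEquiv 2 ℝ _ with heL
  set a : ES := WithLp.toLp 2 (fun _ => -β) with ha
  set b : ES := WithLp.toLp 2 (fun _ => β) with hb
  have hvol : MeasurePreserving eL volume volume :=
    EuclideanSpace.volume_preserving_symm_measurableEquiv_toLp (Fin (n+1))
  have key := integral_divergence_of_hasFDerivAt_off_countable_of_equiv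
    (E := ℝ) eL (fun x y => Iff.rfl) hvol
    (fun i x => f x i)
    (fun i x => (innerSL ℝ (EuclideanSpace.single i (1:ℝ))).comp (f' x))
    {0} (Set.countable_singleton 0) a b
    (fun i => (neg_le_self hβ.le : (-β:ℝ) ≤ β))
    (fun i => ?_) (fun x hx i => ?_)
    (fun x : ES => ∑ i, f' x (EuclideanSpace.single i 1) i) (fun x => ?_) ?_
  rotate_left
  · -- continuity of coordinates on Icc
    exact ((PiLp.continuous_apply 2 (fun _ : Fin (n+1) => ℝ) i).comp hc).continuousOn
  · -- differentiability off {0}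
    have hx0 : x ≠ 0 := by
      intro h; exact hx.2 (by simp [h])
    have := ((innerSL ℝ (EuclideanSpace.single i (1:ℝ))).hasFDerivAt).comp x (hd x hx0)
    refine this.congr_of_eventuallyEq (Filter.Eventually.of_forall fun y => ?_)
    simp [EuclideanSpace.inner_single_left]
  · -- DF formula
    refine Finset.sum_congr rfl fun i _ => ?_
    have h1 : (eL.symm (Pi.single i (1:ℝ))) = EuclideanSpace.single i (1:ℝ) := rfl
    rw [h1]
    simp [EuclideanSpace.inner_single_left]
  · -- integrability on Icc
    exact hint.integrableOn
  · -- main conclusion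
    have hfaces : ∀ (i : Fin (n+1)) (c : ℝ), β ≤ |c| →
        ∀ y : Fin n → ℝ, f (eL.symm (i.insertNth c y)) i = 0 := by
      intro i c hcb y
      set z : Fin (n+1) → ℝ := i.insertNth c y with hz
      have hn : β ≤ ‖eL.symm z‖ := by
        have h2 : |z i| ≤ ‖eL.symm z‖ := coordinate_abs_le_norm (eL.symm z) i
        rw [hz, Fin.insertNth_apply_same] at h2
        exact hcb.trans h2
      rw [hsupp _ hn]
      rfl
    have hcompl : ∀ x : ES, x ∉ Icc a b → ∑ i, f' x (EuclideanSpace.single i 1) i = 0 := by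
      intro x hx
      rcases le_or_gt β ‖x‖ with h | h
      · exact hdiv0 x h
      · exfalso
        apply hx
        have hco : ∀ i, |x i| ≤ β := fun i => (coordinate_abs_le_norm x i).trans h.le
        exact Set.mem_Icc.mpr ⟨fun i => (abs_le.mp (hco i)).1, fun i => (abs_le.mp (hco i)).2⟩
    rw [← setIntegral_eq_integral_of_forall_compl_eq_zero hcompl]
    have hthis : ∀ i : Fin (n+1),
        ((∫ x in Icc (eL a ∘ i.succAbove) (eL b ∘ i.succAbove),
            f (eL.symm (i.insertNth (eL b i) x)) i) -
          ∫ x in Icc (eL a ∘ i.succAbove) (eL b ∘ i.succAbove),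
            f (eL.symm (i.insertNth (eL a i) x)) i) = 0 := by
      intro i
      have hbi : (β:ℝ) ≤ |eL b i| := by
        have : eL b i = β := rfl
        rw [this]; rw [abs_of_pos hβ]
      have hai : (β:ℝ) ≤ |eL a i| := by
        have : eL a i = -β := rfl
        rw [this, abs_neg, abs_of_pos hβ]
      simp [hfaces i _ hbi, hfaces i _ hai]
    refine Eq.trans (key.trans ?_) rfl
    rw [Finset.sum_congr rfl fun i _ => hthis i, Finset.sum_const, smul_zero]

lemma core {α β : ℝ} (hα : 0 ≤ α) (hαβ : α < β)
    (g : ℝ → ℝ) (hg : Continuous g) (hg0 : ∀ t, t ∉ Set.Ioo α β → g t = 0)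
    (E : ES → ℝ) (hE : ContDiff ℝ (⊤ : ℕ∞) E)
    (H : ES → ES) (hH : ContDiff ℝ (⊤ : ℕ∞) H) :
    ∫ x : ES, g ‖x‖ * E x * (inner ℝ ((‖x‖)⁻¹ • x) (H x) : ℝ)
      = ∫ x : ES, (∫ t in (‖x‖)..β, g t) * (fderiv ℝ E x (H x) + E x * diver H x) := by
  have hβ : 0 < β := lt_of_le_of_lt hα hαβ
  set Ψ : ℝ → ℝ := fun σ => ∫ t in σ..β, g t with hΨdef
  have hΨd : ∀ σ, HasDerivAt Ψ (-(g σ)) σ := fun σ =>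
    intervalIntegral.integral_hasDerivAt_left (hg.intervalIntegrable σ β)
      (hg.stronglyMeasurableAtFilter _ _) hg.continuousAt
  have hΨc : Continuous Ψ := by
    rw [continuous_iff_continuousAt]; exact fun σ => (hΨd σ).continuousAt
  have hΨ0 : ∀ σ, β ≤ σ → Ψ σ = 0 := by
    intro σ hσ
    have : ∀ t ∈ Set.uIcc σ β, g t = 0 := by
      intro t ht
      rw [Set.uIcc_of_ge hσ] at ht
      exact hg0 t (fun h2 => absurd (ht.1) (not_le.mpr h2.2))
    rw [hΨdef]
    simp only
    rw [intervalIntegral.integral_congr this, intervalIntegral.integral_zero]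
  -- the vector field and its derivative
  set f : ES → ES := fun x => (Ψ ‖x‖ * E x) • H x with hfdef
  set f' : ES → (EuclideanSpace ℝ (Fin (n+1)) →L[ℝ] EuclideanSpace ℝ (Fin (n+1))) := fun x =>
    (Ψ ‖x‖ * E x) • fderiv ℝ H x +
      ((Ψ ‖x‖) • fderiv ℝ E x +
        (E x) • ((-(g ‖x‖)) • innerSL ℝ ((‖x‖)⁻¹ • x))).smulRight (H x) with hf'def
  have hEd : ∀ x : ES, HasFDerivAt E (fderiv ℝ E x) x := fun x =>
    (hE.differentiable (by simp) x).hasFDerivAt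
  have hHd : ∀ x : ES, HasFDerivAt H (fderiv ℝ H x) x := fun x =>
    (hH.differentiable (by simp) x).hasFDerivAt
  have hd : ∀ x : ES, x ≠ 0 → HasFDerivAt f (f' x) x := by
    intro x hx
    have h1 : HasFDerivAt (fun y : ES => Ψ ‖y‖) ((-(g ‖x‖)) • innerSL ℝ ((‖x‖)⁻¹ • x)) x :=
      (hΨd ‖x‖).comp_hasFDerivAt x (normFDeriv x hx)
    have h2 : HasFDerivAt (fun y : ES => Ψ ‖y‖ * E y)
        ((Ψ ‖x‖) • fderiv ℝ E x + (E x) • ((-(g ‖x‖)) • innerSL ℝ ((‖x‖)⁻¹ • x))) x :=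
      h1.mul (hEd x)
    exact h2.smul (hHd x)
  -- divergence formula
  set P1 : ES → ℝ := fun x => g ‖x‖ * E x * (inner ℝ ((‖x‖)⁻¹ • x) (H x) : ℝ) with hP1def
  set P2 : ES → ℝ := fun x => Ψ ‖x‖ * (fderiv ℝ E x (H x) + E x * diver H x) with hP2def
  have hdivf : ∀ x : ES, ∑ i, f' x (EuclideanSpace.single i 1) i = P2 x - P1 x := by
    intro x
    have expand : ∀ i : Fin (n+1), f' x (EuclideanSpace.single i 1) i =
        (Ψ ‖x‖ * E x) * (fderiv ℝ H x (EuclideanSpace.single i 1)) i +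
        ((Ψ ‖x‖) • fderiv ℝ E x +
          (E x) • ((-(g ‖x‖)) • innerSL ℝ ((‖x‖)⁻¹ • x))) (EuclideanSpace.single i 1) *
          (H x) i := by
      intro i
      rw [hf'def]
      simp only [ContinuousLinearMap.add_apply, ContinuousLinearMap.smul_apply,
        ContinuousLinearMap.smulRight_apply, PiLp.add_apply, PiLp.smul_apply, smul_eq_mul]
    rw [Finset.sum_congr rfl fun i _ => expand i, Finset.sum_add_distrib, ← Finset.mul_sum,
      sum_single]
    have : ∑ i, (fderiv ℝ H x (EuclideanSpace.single i 1)) i = diver H x := rfl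
    rw [this]
    simp only [ContinuousLinearMap.add_apply, ContinuousLinearMap.smul_apply, smul_eq_mul,
      innerSL_apply_apply, hP1def, hP2def]
    ring
  have hsupp : ∀ x : ES, β ≤ ‖x‖ → f x = 0 := by
    intro x hx
    rw [hfdef]
    simp only [hΨ0 _ hx, zero_mul, zero_smul]
  have hgnorm0 : ∀ x : ES, β ≤ ‖x‖ → g ‖x‖ = 0 := fun x hx =>
    hg0 _ (fun h2 => absurd hx (not_le.mpr h2.2))
  have hdiv0 : ∀ x : ES, β ≤ ‖x‖ → ∑ i, f' x (EuclideanSpace.single i 1) i = 0 := by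
    intro x hx
    rw [hdivf x, hP1def, hP2def]
    simp [hΨ0 _ hx, hgnorm0 x hx]
  -- continuity of f
  have hc : Continuous f := by
    rw [hfdef]
    exact ((hΨc.comp continuous_norm).mul (hE.continuous)).smul (hH.continuous)
  -- integrability of P2 : continuous with compact support
  have hP2c : Continuous P2 := by
    rw [hP2def]
    have h1 : Continuous fun x : ES => fderiv ℝ E x (H x) :=
      ((hE.continuous_fderiv (by simp)).clm_apply hH.continuous)
    have h2 : Continuous (diver H) := by
      apply continuous_finset_sum
      intro i _
      exact (PiLp.continuous_apply 2 (fun _ : Fin (n+1) => ℝ) i).comp ((hH.continuous_fderiv (by simp)).clm_apply continuous_const)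
    exact (hΨc.comp continuous_norm).mul (h1.add (hE.continuous.mul h2))
  have hP2supp : ∀ x : ES, β ≤ ‖x‖ → P2 x = 0 := by
    intro x hx
    rw [hP2def]; simp [hΨ0 _ hx]
  have hP2int : Integrable P2 := by
    apply hP2c.integrable_of_hasCompactSupport
    apply HasCompactSupport.intro (isCompact_closedBall (0:ES) β)
    intro x hx
    simp only [Metric.mem_closedBall, dist_zero_right, not_le] at hx
    exact hP2supp x hx.le
  -- integrability of P1
  have hP1meas : AEStronglyMeasurable P1 volume := by
    rw [hP1def]
    apply Measurable.aestronglyMeasurable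
    apply Measurable.mul
    · exact ((hg.comp continuous_norm).mul hE.continuous).measurable
    · exact Measurable.inner (measurable_norm.inv.smul measurable_id) hH.continuous.measurable
  obtain ⟨Cg, hCg⟩ : ∃ C, ∀ t, ‖g t‖ ≤ C := by
    refine (HasCompactSupport.intro isCompact_Icc fun t ht =>
      hg0 t fun h2 => ht ⟨h2.1.le, h2.2.le⟩).exists_bound_of_continuous hg
  obtain ⟨CE, hCE⟩ := (isCompact_closedBall (0:ES) β).exists_bound_of_continuousOn
    hE.continuous.continuousOn
  obtain ⟨CH, hCH⟩ := (isCompact_closedBall (0:ES) β).exists_bound_of_continuousOn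
    hH.continuous.continuousOn
  have h0mem : (0:ES) ∈ Metric.closedBall (0:ES) β := by simp [hβ.le]
  have hCg0 : 0 ≤ Cg := (norm_nonneg (g 0)).trans (hCg 0)
  have hCE0 : 0 ≤ CE := (norm_nonneg (E 0)).trans (hCE 0 h0mem)
  have hCH0 : 0 ≤ CH := (norm_nonneg (H 0)).trans (hCH 0 h0mem)
  have hbound : ∀ x : ES, ‖P1 x‖ ≤
      (Metric.closedBall (0:ES) β).indicator (fun _ => Cg * CE * CH) x := by
    intro x
    by_cases hx : ‖x‖ ≤ β
    · have hmem : x ∈ Metric.closedBall (0:ES) β := by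
        simp [Metric.mem_closedBall, dist_zero_right, hx]
      rw [Set.indicator_of_mem hmem]
      have hu : ‖(‖x‖)⁻¹ • x‖ ≤ 1 := by
        rcases eq_or_ne x 0 with rfl | hx0
        · simp
        · rw [norm_smul, norm_inv, norm_norm, inv_mul_cancel₀ (norm_ne_zero_iff.mpr hx0)]
      have hinner : ‖(inner ℝ ((‖x‖)⁻¹ • x) (H x) : ℝ)‖ ≤ CH := by
        refine (abs_real_inner_le_norm _ _).trans ?_
        calc ‖(‖x‖)⁻¹ • x‖ * ‖H x‖ ≤ 1 * CH := by
              apply mul_le_mul hu (hCH x hmem) (norm_nonneg _) zero_le_one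
          _ = CH := one_mul CH
      rw [hP1def]
      simp only [norm_mul]
      calc ‖g ‖x‖‖ * ‖E x‖ * ‖(inner ℝ ((‖x‖)⁻¹ • x) (H x) : ℝ)‖
          ≤ (Cg * CE) * CH := by
            apply mul_le_mul _ hinner (norm_nonneg _) (by positivity)
            exact mul_le_mul (hCg _) (hCE x hmem) (norm_nonneg _) hCg0
        _ = Cg * CE * CH := rfl
    · have : g ‖x‖ = 0 := hgnorm0 x (not_le.mp hx).le
      rw [Set.indicator_of_notMem (by simpa [Metric.mem_closedBall, dist_zero_right] using hx)]
      rw [hP1def]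
      simp [this]
  have hindint : Integrable ((Metric.closedBall (0:ES) β).indicator (fun _ => Cg * CE * CH)) := by
    rw [integrable_indicator_iff measurableSet_closedBall]
    apply (integrableOn_const_iff enorm_ne_top).mpr
    exact Or.inr (measure_closedBall_lt_top)
  have hP1int : Integrable P1 := Integrable.mono' hindint hP1meas (ae_of_all _ hbound)
  -- conclusion
  have hsum_eq : (fun x : ES => ∑ i, f' x (EuclideanSpace.single i 1) i)
      = fun x => P2 x - P1 x := funext hdivf
  have hint : Integrable (fun x : ES => ∑ i, f' x (EuclideanSpace.single i 1) i) := by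
    rw [hsum_eq]; exact hP2int.sub hP1int
  have hzero := divergence_integral_zero hβ f f' hc hd hsupp hdiv0 hint
  rw [hsum_eq, integral_sub hP2int hP1int, sub_eq_zero] at hzero
  exact hzero.symm

end DivThm

end Aux

/-- Lemma 6.4 (scalar instance): radial partial integration formula
`∫_{α<|x|<β} φ(|x|) E ⟨x/|x|, H⟩ dx = ∫_{|x|<β} ψ(|x|) (⟨∇E, H⟩ + E div H) dx`
with `ψ(σ) = ∫_{max{α,σ}}^{β} φ(s) ds`. -/
theorem radial_partial_integration
    (N : ℕ) (hN : 1 ≤ N) (α β : ℝ) (hα : 0 ≤ α) (hαβ : α < β)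
    (φ : ℝ → ℝ) (hφ : ContinuousOn φ (Set.Icc α β))
    (E : EuclideanSpace ℝ (Fin N) → ℝ) (hE : ContDiff ℝ (⊤ : ℕ∞) E)
    (H : EuclideanSpace ℝ (Fin N) → EuclideanSpace ℝ (Fin N)) (hH : ContDiff ℝ (⊤ : ℕ∞) H)
    (ψ : ℝ → ℝ) (hψ : ∀ σ ∈ Set.Icc (0 : ℝ) β, ψ σ = ∫ s in max α σ..β, φ s) :
    (∫ x in {x : EuclideanSpace ℝ (Fin N) | α < ‖x‖ ∧ ‖x‖ < β},
        φ ‖x‖ * E x * (inner ℝ ((‖x‖)⁻¹ • x) (H x) : ℝ)) =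
      ∫ x in Metric.ball (0 : EuclideanSpace ℝ (Fin N)) β,
        ψ ‖x‖ * (fderiv ℝ E x (H x) + E x * diver H x) := by
  obtain ⟨n, rfl⟩ : ∃ n, N = n + 1 := ⟨N - 1, (Nat.succ_pred_eq_of_pos hN).symm⟩
  have hβ : 0 < β := lt_of_le_of_lt hα hαβ
  -- clamped φ
  set φc : ℝ → ℝ := fun t => φ (max α (min t β)) with hφcdef
  have hclamp_mem : ∀ t, max α (min t β) ∈ Set.Icc α β :=
    fun t => ⟨le_max_left _ _, max_le hαβ.le (min_le_right t β)⟩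
  have hφc_cont : Continuous φc := by
    apply hφ.comp_continuous _ hclamp_mem
    fun_prop
  have hφc_eq : ∀ t ∈ Set.Icc α β, φc t = φ t := by
    intro t ht
    rw [hφcdef]
    simp only
    rw [min_eq_left ht.2, max_eq_right ht.1]
  obtain ⟨Cφ, hCφ⟩ := isCompact_Icc.exists_bound_of_continuousOn hφ
  have hφc_bd : ∀ t, ‖φc t‖ ≤ Cφ := fun t => hCφ _ (hclamp_mem t)
  have hCφ0 : 0 ≤ Cφ := (norm_nonneg _).trans (hφc_bd 0)
  -- the approximating sequence
  set g : ℕ → ℝ → ℝ := fun k t => cutoff α β k t * φc t with hgdef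
  have hg_cont : ∀ k, Continuous (g k) := fun k => (cutoff_continuous α β k).mul hφc_cont
  have hg_zero : ∀ k t, t ∉ Set.Ioo α β → g k t = 0 := by
    intro k t ht; rw [hgdef]; simp only; rw [cutoff_eq_zero α β k t ht, zero_mul]
  have hg_bd : ∀ k t, ‖g k t‖ ≤ Cφ := by
    intro k t
    rw [hgdef]
    simp only [norm_mul]
    calc ‖cutoff α β k t‖ * ‖φc t‖ ≤ 1 * Cφ := by
          apply mul_le_mul _ (hφc_bd t) (norm_nonneg _) zero_le_one
          rw [Real.norm_eq_abs, abs_of_nonneg (cutoff_nonneg α β k t)]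
          exact cutoff_le_one α β k t
      _ = Cφ := one_mul Cφ
  have hg_tendsto : ∀ t, Tendsto (fun k => g k t) atTop (𝓝 ((Set.Ioo α β).indicator φc t)) := by
    intro t
    by_cases ht : t ∈ Set.Ioo α β
    · rw [Set.indicator_of_mem ht]
      have := (cutoff_tendsto α β t ht).mul_const (φc t)
      rwa [one_mul] at this
    · rw [Set.indicator_of_notMem ht]
      have : (fun k => g k t) = fun _ => 0 := by
        funext k; exact hg_zero k t ht
      rw [this]; exact tendsto_const_nhds
  -- bounds on E, H and the RHS integrand
  set h : EuclideanSpace ℝ (Fin (n+1)) → ℝ :=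
    fun x => fderiv ℝ E x (H x) + E x * diver H x with hhdef
  have hh_cont : Continuous h := by
    rw [hhdef]
    have h1 : Continuous fun x : EuclideanSpace ℝ (Fin (n+1)) => fderiv ℝ E x (H x) :=
      ((hE.continuous_fderiv (by simp)).clm_apply hH.continuous)
    have h2 : Continuous (diver H) := by
      apply continuous_finset_sum
      intro i _
      exact (PiLp.continuous_apply 2 (fun _ : Fin (n+1) => ℝ) i).comp ((hH.continuous_fderiv (by simp)).clm_apply continuous_const)
    exact h1.add (hE.continuous.mul h2)
  obtain ⟨CE, hCE⟩ := (isCompact_closedBall (0:EuclideanSpace ℝ (Fin (n+1))) β).exists_bound_of_continuousOn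
    hE.continuous.continuousOn
  obtain ⟨CH, hCH⟩ := (isCompact_closedBall (0:EuclideanSpace ℝ (Fin (n+1))) β).exists_bound_of_continuousOn
    hH.continuous.continuousOn
  obtain ⟨Ch, hCh⟩ := (isCompact_closedBall (0:EuclideanSpace ℝ (Fin (n+1))) β).exists_bound_of_continuousOn
    hh_cont.continuousOn
  have h0mem : (0:EuclideanSpace ℝ (Fin (n+1))) ∈ Metric.closedBall (0:EuclideanSpace ℝ (Fin (n+1))) β := by
    simp [hβ.le]
  have hCE0 : 0 ≤ CE := (norm_nonneg _).trans (hCE 0 h0mem)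
  have hCH0 : 0 ≤ CH := (norm_nonneg _).trans (hCH 0 h0mem)
  have hCh0 : 0 ≤ Ch := (norm_nonneg _).trans (hCh 0 h0mem)
  -- the annulus
  set A : Set (EuclideanSpace ℝ (Fin (n+1))) := {x | α < ‖x‖ ∧ ‖x‖ < β} with hAdef
  have hAopen : IsOpen A := by
    have : A = norm ⁻¹' (Set.Ioo α β) := rfl
    rw [this]
    exact IsOpen.preimage continuous_norm isOpen_Ioo
  have hAmeas : MeasurableSet A := hAopen.measurableSet
  have hAball : A ⊆ Metric.closedBall (0:EuclideanSpace ℝ (Fin (n+1))) β := by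
    intro x hx
    simp only [Metric.mem_closedBall, dist_zero_right]
    exact hx.2.le
  have hAfin : volume A < ⊤ :=
    lt_of_le_of_lt (measure_mono hAball) measure_closedBall_lt_top
  -- inner product bound helper
  have hinner_bd : ∀ x : EuclideanSpace ℝ (Fin (n+1)), ‖x‖ ≤ β →
      ‖(inner ℝ ((‖x‖)⁻¹ • x) (H x) : ℝ)‖ ≤ CH := by
    intro x hx
    have hmem : x ∈ Metric.closedBall (0:EuclideanSpace ℝ (Fin (n+1))) β := by
      simp [Metric.mem_closedBall, dist_zero_right, hx]
    have hu : ‖(‖x‖)⁻¹ • x‖ ≤ 1 := by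
      rcases eq_or_ne x 0 with rfl | hx0
      · simp
      · rw [norm_smul, norm_inv, norm_norm, inv_mul_cancel₀ (norm_ne_zero_iff.mpr hx0)]
    refine (abs_real_inner_le_norm _ _).trans ?_
    calc ‖(‖x‖)⁻¹ • x‖ * ‖H x‖ ≤ 1 * CH :=
          mul_le_mul hu (hCH x hmem) (norm_nonneg _) zero_le_one
      _ = CH := one_mul CH
  -- measurability of the inner factor
  have hinner_meas : Measurable fun x : EuclideanSpace ℝ (Fin (n+1)) =>
      (inner ℝ ((‖x‖)⁻¹ • x) (H x) : ℝ) :=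
    Measurable.inner (measurable_norm.inv.smul measurable_id) hH.continuous.measurable
  -- LHS convergence
  have hLeq : ∀ k, (∫ x : EuclideanSpace ℝ (Fin (n+1)),
      g k ‖x‖ * E x * (inner ℝ ((‖x‖)⁻¹ • x) (H x) : ℝ)) =
      ∫ x in A, g k ‖x‖ * E x * (inner ℝ ((‖x‖)⁻¹ • x) (H x) : ℝ) := by
    intro k
    apply (setIntegral_eq_integral_of_forall_compl_eq_zero _).symm
    intro x hx
    rw [hg_zero k ‖x‖ hx, zero_mul, zero_mul]
  have hLtendsto : Tendsto (fun k => ∫ x in A,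
      g k ‖x‖ * E x * (inner ℝ ((‖x‖)⁻¹ • x) (H x) : ℝ)) atTop
      (𝓝 (∫ x in A, φ ‖x‖ * E x * (inner ℝ ((‖x‖)⁻¹ • x) (H x) : ℝ))) := by
    apply tendsto_integral_of_dominated_convergence (bound := fun _ => Cφ * CE * CH)
    · intro k
      apply Measurable.aestronglyMeasurable
      exact ((((hg_cont k).comp continuous_norm).mul hE.continuous).measurable).mul hinner_meas
    · exact ((integrableOn_const_iff enorm_ne_top).mpr (Or.inr hAfin))
    · intro k
      rw [ae_restrict_iff' hAmeas]
      apply Eventually.of_forall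
      intro x hx
      simp only [norm_mul]
      calc ‖g k ‖x‖‖ * ‖E x‖ * ‖(inner ℝ ((‖x‖)⁻¹ • x) (H x) : ℝ)‖
          ≤ (Cφ * CE) * CH := by
            apply mul_le_mul _ (hinner_bd x hx.out.2.le) (norm_nonneg _) (by positivity)
            exact mul_le_mul (hg_bd k ‖x‖) (hCE x (hAball hx)) (norm_nonneg _) hCφ0
        _ = Cφ * CE * CH := rfl
    · rw [ae_restrict_iff' hAmeas]
      apply Eventually.of_forall
      intro x hx
      have hxm : ‖x‖ ∈ Set.Ioo α β := ⟨hx.out.1, hx.out.2⟩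
      have h1 : Tendsto (fun k => g k ‖x‖) atTop (𝓝 (φ ‖x‖)) := by
        have h2 := hg_tendsto ‖x‖
        rw [Set.indicator_of_mem hxm] at h2
        rwa [hφc_eq ‖x‖ ⟨hxm.1.le, hxm.2.le⟩] at h2
      exact (h1.mul_const (E x)).mul_const _
  -- RHS
  have hg_zero' : ∀ k t, β ≤ t → g k t = 0 := fun k t ht =>
    hg_zero k t (fun h2 => absurd ht (not_le.mpr h2.2))
  have hReq : ∀ k, (∫ x : EuclideanSpace ℝ (Fin (n+1)), (∫ t in (‖x‖)..β, g k t) * h x) =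
      ∫ x in Metric.ball (0 : EuclideanSpace ℝ (Fin (n+1))) β, (∫ t in (‖x‖)..β, g k t) * h x := by
    intro k
    apply (setIntegral_eq_integral_of_forall_compl_eq_zero _).symm
    intro x hx
    simp only [Metric.mem_ball, dist_zero_right, not_lt] at hx
    rw [interval_zero (hg_zero' k) ‖x‖ hx, zero_mul]
  have hΨk_cont : ∀ k, Continuous fun σ : ℝ => ∫ t in σ..β, g k t := by
    intro k
    rw [continuous_iff_continuousAt]
    intro σ
    exact (intervalIntegral.integral_hasDerivAt_left ((hg_cont k).intervalIntegrable σ β)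
      ((hg_cont k).stronglyMeasurableAtFilter _ _) (hg_cont k).continuousAt).continuousAt
  have hΨk_bd : ∀ (k : ℕ) (x : EuclideanSpace ℝ (Fin (n+1))), ‖x‖ < β →
      ‖∫ t in (‖x‖)..β, g k t‖ ≤ Cφ * β := by
    intro k x hx
    have h1 : ‖∫ t in (‖x‖)..β, g k t‖ ≤ Cφ * |β - ‖x‖| :=
      intervalIntegral.norm_integral_le_of_norm_le_const (fun t _ => hg_bd k t)
    refine h1.trans ?_
    have h2 : |β - ‖x‖| ≤ β := by
      rw [abs_of_nonneg (by linarith)]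
      have := norm_nonneg x
      linarith
    exact mul_le_mul_of_nonneg_left h2 hCφ0
  have hΨ_tendsto : ∀ x : EuclideanSpace ℝ (Fin (n+1)), ‖x‖ < β →
      Tendsto (fun k => ∫ t in (‖x‖)..β, g k t) atTop (𝓝 (ψ ‖x‖)) := by
    intro x hx
    set σ := ‖x‖ with hσdef
    have hσβ : σ ≤ β := hx.le
    have heq : ∀ k, (∫ t in σ..β, g k t) = ∫ t in Set.Ioc σ β, g k t := fun k =>
      intervalIntegral.integral_of_le hσβ
    have hDCT : Tendsto (fun k => ∫ t in Set.Ioc σ β, g k t) atTop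
        (𝓝 (∫ t in Set.Ioc σ β, (Set.Ioo α β).indicator φc t)) := by
      apply tendsto_integral_of_dominated_convergence (bound := fun _ => Cφ)
      · exact fun k => ((hg_cont k).measurable).aestronglyMeasurable
      · apply (integrableOn_const_iff enorm_ne_top).mpr
        exact Or.inr measure_Ioc_lt_top
      · exact fun k => Eventually.of_forall (fun t => hg_bd k t)
      · exact Eventually.of_forall (fun t => hg_tendsto t)
    have hlim : (∫ t in Set.Ioc σ β, (Set.Ioo α β).indicator φc t) = ψ σ := by
      rw [setIntegral_indicator measurableSet_Ioo]
      have hsets : Set.Ioc σ β ∩ Set.Ioo α β = Set.Ioo (max α σ) β := by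
        ext t
        simp only [Set.mem_inter_iff, Set.mem_Ioc, Set.mem_Ioo, max_lt_iff]
        constructor
        · rintro ⟨⟨h1, h2⟩, h3, h4⟩; exact ⟨⟨h3, h1⟩, h4⟩
        · rintro ⟨⟨h3, h1⟩, h4⟩; exact ⟨⟨h1, h4.le⟩, h3, h4⟩
      rw [hsets, ← integral_Ioc_eq_integral_Ioo]
      have hcongr : ∀ t ∈ Set.Ioc (max α σ) β, φc t = φ t := by
        intro t ht
        exact hφc_eq t ⟨(le_max_left α σ).trans ht.1.le, ht.2⟩
      rw [setIntegral_congr_fun measurableSet_Ioc hcongr]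
      rw [← intervalIntegral.integral_of_le (max_le hαβ.le hσβ)]
      exact (hψ σ ⟨norm_nonneg x, hσβ⟩).symm
    rw [← hlim]
    exact hDCT.congr (fun k => (heq k).symm)
  have hRtendsto : Tendsto (fun k => ∫ x in Metric.ball (0 : EuclideanSpace ℝ (Fin (n+1))) β,
      (∫ t in (‖x‖)..β, g k t) * h x) atTop
      (𝓝 (∫ x in Metric.ball (0 : EuclideanSpace ℝ (Fin (n+1))) β, ψ ‖x‖ * h x)) := by
    apply tendsto_integral_of_dominated_convergence (bound := fun _ => Cφ * β * Ch)
    · intro k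
      exact (((hΨk_cont k).comp continuous_norm).mul hh_cont).measurable.aestronglyMeasurable
    · apply (integrableOn_const_iff enorm_ne_top).mpr
      exact Or.inr measure_ball_lt_top
    · intro k
      rw [ae_restrict_iff' measurableSet_ball]
      apply Eventually.of_forall
      intro x hx
      simp only [Metric.mem_ball, dist_zero_right] at hx
      rw [norm_mul]
      apply mul_le_mul (hΨk_bd k x hx) _ (norm_nonneg _) (by positivity)
      apply hCh x
      simp [Metric.mem_closedBall, dist_zero_right, hx.le]
    · rw [ae_restrict_iff' measurableSet_ball]
      apply Eventually.of_forall
      intro x hx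
      simp only [Metric.mem_ball, dist_zero_right] at hx
      exact (hΨ_tendsto x hx).mul_const (h x)
  -- conclusion
  have hcore : ∀ k, (∫ x in A, g k ‖x‖ * E x * (inner ℝ ((‖x‖)⁻¹ • x) (H x) : ℝ)) =
      ∫ x in Metric.ball (0 : EuclideanSpace ℝ (Fin (n+1))) β, (∫ t in (‖x‖)..β, g k t) * h x := by
    intro k
    rw [← hLeq k, ← hReq k]
    exact core hα hαβ (g k) (hg_cont k) (hg_zero k) E hE H hH
  exact tendsto_nhds_unique (hLtendsto.congr (fun k => hcore k)) hRtendsto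
end
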